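/- Let Ω = ((Ψ_n, M_n, P_n))_{n∈ℕ} be an admissible module-sequence, i.e. max{B_n, B_n L_n² R_n²} ≤ 1 for all n ≥ 1. Then the feature extractor Φ_Ω is well-defined and non-expansive at the origin: for every f ∈ L²(ℝ^d), |||Φ_Ω(f)|||² = Σ_{n≥0} Σ_{q∈Λ₁^n} ‖(U[q]f)∗χ_n‖₂² ≤ ‖f‖₂², so in particular Φ_Ω(f) has finite feature-space norm. -/

import Mathlib

/-!
Each layer is non-expansive in energy. The dilation `F ↦ S^{d/2} F(S·)` is an isometry of `L²`,
so by the Lipschitz bounds `‖U_n[λ]h‖₂ ≤ L_n R_n ‖h ∗ g_λ‖₂`, and the frame upper bound gives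
`‖h ∗ χ_n‖₂² + Σ_λ ‖U_n[λ]h‖₂² ≤ max(1, L_n² R_n²) B_n ‖h‖₂² ≤ ‖h‖₂²`; Young's inequality
`‖h ∗ g‖₂ ≤ ‖g‖₁ ‖h‖₂` keeps every `U[q]f` in `L²`. Summed over the paths `q` of length `n`, this
says `b_n + a_{n+1} ≤ a_n` for the path energies `a_n = Σ_q ‖U[q]f‖₂²` and the layer outputs
`b_n = Σ_q ‖U[q]f ∗ χ_n‖₂²`, and telescoping gives `Σ_n b_n ≤ a_0 = ‖f‖₂²`.
-/

open MeasureTheory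
open scoped ENNReal FourierTransform

noncomputable section

/-- ℝ^d as a Euclidean space. -/
abbrev Ed (d : ℕ) : Type := EuclideanSpace ℝ (Fin d)

/-- Convolution (f ∗ g)(x) = ∫ f(y) g(x − y) dy. -/
def convol {d : ℕ} (f g : Ed d → ℂ) : Ed d → ℂ := fun x => ∫ y, f y * g (x - y)

/-- One network layer: U[λ]f = S^{d/2} · P(M(f ∗ g))(S·). -/
def layerU {d : ℕ} (S : ℝ) (P M : (Ed d → ℂ) → (Ed d → ℂ)) (g : Ed d → ℂ)
    (f : Ed d → ℂ) : Ed d → ℂ :=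
  fun x => ((S ^ ((d : ℝ) / 2) : ℝ) : ℂ) * P (M (convol f g)) (S • x)

/-- Iterated layer operators along a path q = (λ₁, …, λ_n):
U[q]f = U_n[λ_n] ⋯ U₁[λ₁] f. -/
def pathU {d : ℕ} (Λ : ℕ → Type) (g : (n : ℕ) → Λ n → Ed d → ℂ)
    (M P : ℕ → (Ed d → ℂ) → (Ed d → ℂ)) (S : ℕ → ℝ) (n : ℕ)
    (q : (k : Fin n) → Λ k.1) (f : Ed d → ℂ) : Ed d → ℂ :=
  Fin.foldl n (fun h k => layerU (S k.1) (P k.1) (M k.1) (g k.1 (q k)) h) f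


theorem ENNReal.lintegral_mul_sq_le {α : Type*} [MeasurableSpace α] (μ : Measure α)
    {F G : α → ℝ≥0∞} (hF : AEMeasurable F μ) (hG : AEMeasurable G μ) :
    (∫⁻ a, F a * G a ∂μ) ^ 2 ≤ (∫⁻ a, F a ^ 2 * G a ∂μ) * ∫⁻ a, G a ∂μ := by
  have hsqrt : ∀ x : ℝ≥0∞, (x ^ (2⁻¹ : ℝ)) ^ 2 = x := ENNReal.rpow_inv_natCast_pow two_ne_zero
  -- Cauchy–Schwarz for `F √G` and `√G`
  have hCS := ENNReal.lintegral_mul_le_Lp_mul_Lq μ .two_two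
    (hF.mul (hG.pow_const (2⁻¹ : ℝ))) (hG.pow_const (2⁻¹ : ℝ))
  simp only [Pi.mul_apply, ENNReal.rpow_two, mul_pow, hsqrt, mul_assoc, ← pow_two] at hCS
  calc (∫⁻ a, F a * G a ∂μ) ^ 2
      ≤ ((∫⁻ a, F a ^ 2 * G a ∂μ) ^ (1 / 2 : ℝ) * (∫⁻ a, G a ∂μ) ^ (1 / 2 : ℝ)) ^ 2 :=
        pow_le_pow_left' hCS 2
    _ = (∫⁻ a, F a ^ 2 * G a ∂μ) * ∫⁻ a, G a ∂μ := by
        rw [mul_pow, one_div, hsqrt, hsqrt]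

theorem lintegral_sq_lintegral_mul_sub_le {G : Type*} [AddCommGroup G] [MeasurableSpace G]
    [MeasurableAdd₂ G] [MeasurableNeg G] (μ : Measure G) [SFinite μ] [μ.IsAddLeftInvariant]
    [μ.IsNegInvariant] {F K : G → ℝ≥0∞} (hF : Measurable F) (hK : Measurable K) :
    ∫⁻ x, (∫⁻ y, F y * K (x - y) ∂μ) ^ 2 ∂μ ≤ (∫⁻ y, F y ^ 2 ∂μ) * (∫⁻ y, K y ∂μ) ^ 2 := by
  have hKx : ∀ x, ∫⁻ y, K (x - y) ∂μ = ∫⁻ y, K y ∂μ := fun x =>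
    (Measure.measurePreserving_sub_left μ x).lintegral_comp hK
  have hKy : ∀ y, ∫⁻ x, K (x - y) ∂μ = ∫⁻ x, K x ∂μ := fun y =>
    (measurePreserving_sub_right μ y).lintegral_comp hK
  have hmeas : Measurable fun p : G × G => F p.2 ^ 2 * K (p.1 - p.2) :=
    ((hF.comp measurable_snd).pow_const 2).mul (hK.comp (measurable_fst.sub measurable_snd))
  calc ∫⁻ x, (∫⁻ y, F y * K (x - y) ∂μ) ^ 2 ∂μ
      ≤ ∫⁻ x, (∫⁻ y, F y ^ 2 * K (x - y) ∂μ) * ∫⁻ y, K y ∂μ ∂μ := by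
        refine lintegral_mono fun x => ?_
        rw [← hKx x]
        exact ENNReal.lintegral_mul_sq_le μ hF.aemeasurable
          (hK.comp (measurable_const.sub measurable_id)).aemeasurable
    _ = (∫⁻ x, ∫⁻ y, F y ^ 2 * K (x - y) ∂μ ∂μ) * ∫⁻ y, K y ∂μ :=
        lintegral_mul_const _ (hmeas.lintegral_prod_right')
    _ = (∫⁻ y, F y ^ 2 ∂μ) * (∫⁻ y, K y ∂μ) ^ 2 := by
        rw [lintegral_lintegral_swap hmeas.aemeasurable, pow_two, ← mul_assoc]
        congr 1
        rw [← lintegral_mul_const _ (hF.pow_const 2)]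
        refine lintegral_congr fun y => ?_
        rw [lintegral_const_mul _ (f := fun x => K (x - y)) (hK.comp (measurable_sub_const y)),
          hKy]

theorem eLpNorm_two_sq {α E : Type*} [MeasurableSpace α] [NormedAddCommGroup E] (μ : Measure α)
    (f : α → E) : eLpNorm f 2 μ ^ 2 = ∫⁻ x, ‖f x‖ₑ ^ 2 ∂μ := by
  simpa using eLpNorm_nnreal_pow_eq_lintegral (μ := μ) (f := f) (p := 2) two_ne_zero

section Convolution

variable {d : ℕ}

theorem convol_congr_ae {f f' g g' : Ed d → ℂ} (hf : f =ᵐ[volume] f') (hg : g =ᵐ[volume] g') :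
    convol f g = convol f' g' := by
  funext x
  have hgx : (fun y => g (x - y)) =ᵐ[volume] fun y => g' (x - y) :=
    (Measure.measurePreserving_sub_left volume x).quasiMeasurePreserving.ae_eq_comp hg
  refine integral_congr_ae ?_
  filter_upwards [hf, hgx] with y hfy hgy
  rw [hfy, hgy]

theorem enorm_convol_le (f g : Ed d → ℂ) (x : Ed d) :
    ‖convol f g x‖ₑ ≤ ∫⁻ y, ‖f y‖ₑ * ‖g (x - y)‖ₑ :=
  (enorm_integral_le_lintegral_enorm _).trans_eq (by simp only [enorm_mul])

theorem MeasureTheory.AEStronglyMeasurable.convol {f g : Ed d → ℂ}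
    (hf : AEStronglyMeasurable f volume) (hg : AEStronglyMeasurable g volume) :
    AEStronglyMeasurable (convol f g) volume :=
  (hf.convolution_integrand (ContinuousLinearMap.mul ℂ ℂ) hg).integral_prod_right'

theorem eLpNorm_convol_le {f g : Ed d → ℂ} (hf : AEStronglyMeasurable f volume)
    (hg : AEStronglyMeasurable g volume) :
    eLpNorm (convol f g) 2 volume ≤ eLpNorm g 1 volume * eLpNorm f 2 volume := by
  rw [convol_congr_ae hf.ae_eq_mk hg.ae_eq_mk, eLpNorm_congr_ae hf.ae_eq_mk,
    eLpNorm_congr_ae hg.ae_eq_mk]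
  refine (ENNReal.pow_le_pow_left_iff two_ne_zero).1 ?_
  rw [mul_pow, eLpNorm_two_sq, eLpNorm_two_sq, eLpNorm_one_eq_lintegral_enorm, mul_comm]
  calc ∫⁻ x, ‖convol (hf.mk f) (hg.mk g) x‖ₑ ^ 2
      ≤ ∫⁻ x, (∫⁻ y, ‖hf.mk f y‖ₑ * ‖hg.mk g (x - y)‖ₑ) ^ 2 :=
        lintegral_mono fun x => pow_le_pow_left' (enorm_convol_le _ _ x) 2
    _ ≤ _ := lintegral_sq_lintegral_mul_sub_le volume
        hf.stronglyMeasurable_mk.measurable.enorm hg.stronglyMeasurable_mk.measurable.enorm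

theorem MeasureTheory.MemLp.convol {f g : Ed d → ℂ} (hf : MemLp f 2 volume)
    (hg : MemLp g 1 volume) : MemLp (convol f g) 2 volume :=
  ⟨hf.1.convol hg.1, (eLpNorm_convol_le hf.1 hg.1).trans_lt (ENNReal.mul_lt_top hg.2 hf.2)⟩

end Convolution

theorem eLpNorm_comp_smul {E F : Type*} [NormedAddCommGroup E] [NormedSpace ℝ E]
    [MeasurableSpace E] [BorelSpace E] [FiniteDimensional ℝ E] (μ : Measure E)
    [μ.IsAddHaarMeasure] [NormedAddCommGroup F] (f : E → F) {r : ℝ} (hr : r ≠ 0)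
    (p : ℝ≥0∞) :
    eLpNorm (fun x => f (r • x)) p μ =
      ENNReal.ofReal |(r ^ Module.finrank ℝ E)⁻¹| ^ (1 / p).toReal * eLpNorm f p μ := by
  have hc : ENNReal.ofReal |(r ^ Module.finrank ℝ E)⁻¹| ≠ 0 := by
    simpa using pow_pos (abs_pos.2 hr) _
  rw [← smul_eq_mul, ← eLpNorm_smul_measure_of_ne_zero hc, ← Measure.map_addHaar_smul μ hr]
  exact ((MeasurableEquiv.smul₀ r hr).measurableEmbedding.eLpNorm_map_measure).symm

theorem eLpNorm_apply_le_of_lipschitz {α E : Type*} [MeasurableSpace α] [NormedAddCommGroup E]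
    {μ : Measure α} {p : ℝ≥0∞} {T : (α → E) → α → E} {K : ℝ} (hT0 : T 0 = 0)
    (hT : ∀ f h, MemLp f p μ → MemLp h p μ →
      eLpNorm (T f - T h) p μ ≤ ENNReal.ofReal K * eLpNorm (f - h) p μ)
    {f : α → E} (hf : MemLp f p μ) : eLpNorm (T f) p μ ≤ ENNReal.ofReal K * eLpNorm f p μ := by
  simpa [hT0] using hT f 0 hf MemLp.zero

theorem max_one_sq_mul_ofReal_le_one {B L R : ℝ} (hL : 0 ≤ L) (hR : 0 ≤ R)
    (hadm : max B (B * L ^ 2 * R ^ 2) ≤ 1) :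
    max 1 ((ENNReal.ofReal L * ENNReal.ofReal R) ^ 2) * ENNReal.ofReal B ≤ 1 := by
  rw [← ENNReal.ofReal_mul hL, ← ENNReal.ofReal_pow (by positivity), ← ENNReal.ofReal_one,
    ← ENNReal.ofReal_max, ← ENNReal.ofReal_mul (by positivity)]
  refine ENNReal.ofReal_le_ofReal ?_
  rcases le_total ((L * R) ^ 2) 1 with h | h
  · rw [max_eq_left h, one_mul]
    exact (le_max_left _ _).trans hadm
  · rw [max_eq_right h]
    linarith [le_max_right B (B * L ^ 2 * R ^ 2)]

section Layer

variable {d : ℕ} {L R S : ℝ} {M P : (Ed d → ℂ) → Ed d → ℂ}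

theorem layerU_eq_smul_comp_smul (g h : Ed d → ℂ) :
    layerU S P M g h = ((S ^ ((d : ℝ) / 2) : ℝ) : ℂ) • fun x => P (M (convol h g)) (S • x) :=
  rfl

theorem eLpNorm_layerU {g h : Ed d → ℂ} (hS : 0 < S) :
    eLpNorm (layerU S P M g h) 2 volume = eLpNorm (P (M (convol h g))) 2 volume := by
  rw [layerU_eq_smul_comp_smul, eLpNorm_const_smul, eLpNorm_comp_smul _ _ hS.ne',
    finrank_euclideanSpace_fin, ← mul_assoc]
  have hsqrt : (S ^ ((d : ℝ) / 2)) * ((S ^ d)⁻¹) ^ (2⁻¹ : ℝ) = 1 := by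
    rw [Real.inv_rpow (by positivity), ← Real.rpow_natCast, ← Real.rpow_mul hS.le,
      ← div_eq_mul_inv (d : ℝ), mul_inv_cancel₀ (by positivity)]
  have hnorm : ‖((S ^ ((d : ℝ) / 2) : ℝ) : ℂ)‖ₑ *
      ENNReal.ofReal |(S ^ d)⁻¹| ^ (1 / (2 : ℝ≥0∞)).toReal = 1 := by
    rw [← ofReal_norm, Complex.norm_real, Real.norm_eq_abs, abs_of_pos (by positivity),
      abs_of_pos (by positivity), ENNReal.ofReal_rpow_of_nonneg (by positivity) (by norm_num),
      ← ENNReal.ofReal_mul (by positivity)]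
    simpa using congrArg ENNReal.ofReal hsqrt
  rw [hnorm, one_mul]

theorem memLp_layerU {g h : Ed d → ℂ} (hS : 0 < S)
    (hF : MemLp (P (M (convol h g))) 2 volume) :
    MemLp (layerU S P M g h) 2 volume := by
  refine ⟨?_, by rw [eLpNorm_layerU hS]; exact hF.2⟩
  rw [layerU_eq_smul_comp_smul]
  exact (hF.1.comp_quasiMeasurePreserving
    (Measure.quasiMeasurePreserving_smul volume hS.ne')).const_smul _

theorem eLpNorm_layerU_le {g h : Ed d → ℂ} (hS : 0 < S) (hg : MemLp g 1 volume)
    (hM : ∀ f, MemLp f 2 volume → eLpNorm (M f) 2 volume ≤ ENNReal.ofReal L * eLpNorm f 2 volume)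
    (hP : ∀ f, MemLp f 2 volume → eLpNorm (P f) 2 volume ≤ ENNReal.ofReal R * eLpNorm f 2 volume)
    (hMmem : ∀ f, MemLp f 2 volume → MemLp (M f) 2 volume) (hh : MemLp h 2 volume) :
    eLpNorm (layerU S P M g h) 2 volume ≤
      ENNReal.ofReal L * ENNReal.ofReal R * eLpNorm (convol h g) 2 volume := by
  have hconv := hh.convol hg
  calc eLpNorm (layerU S P M g h) 2 volume
      = eLpNorm (P (M (convol h g))) 2 volume := eLpNorm_layerU hS
    _ ≤ ENNReal.ofReal R * (ENNReal.ofReal L * eLpNorm (convol h g) 2 volume) :=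
        (hP _ (hMmem _ hconv)).trans (mul_le_mul_right (hM _ hconv) _)
    _ = ENNReal.ofReal L * ENNReal.ofReal R * eLpNorm (convol h g) 2 volume := by ring

theorem energy_layerU_le {ι : Type*} {g : ι → Ed d → ℂ} {χ h : Ed d → ℂ} {B : ℝ}
    (hg : ∀ i, MemLp (g i) 1 volume) (hL : 0 ≤ L) (hR : 0 ≤ R) (hS : 0 < S)
    (hframe : ∀ f, MemLp f 2 volume →
      eLpNorm (convol f χ) 2 volume ^ 2 + ∑' i, eLpNorm (convol f (g i)) 2 volume ^ 2 ≤
        ENNReal.ofReal B * eLpNorm f 2 volume ^ 2)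
    (hM : ∀ f, MemLp f 2 volume → eLpNorm (M f) 2 volume ≤ ENNReal.ofReal L * eLpNorm f 2 volume)
    (hP : ∀ f, MemLp f 2 volume → eLpNorm (P f) 2 volume ≤ ENNReal.ofReal R * eLpNorm f 2 volume)
    (hMmem : ∀ f, MemLp f 2 volume → MemLp (M f) 2 volume)
    (hadm : max B (B * L ^ 2 * R ^ 2) ≤ 1) (hh : MemLp h 2 volume) :
    eLpNorm (convol h χ) 2 volume ^ 2 + ∑' i, eLpNorm (layerU S P M (g i) h) 2 volume ^ 2 ≤
      eLpNorm h 2 volume ^ 2 := by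
  set C := (ENNReal.ofReal L * ENNReal.ofReal R) ^ 2
  have hU : ∑' i, eLpNorm (layerU S P M (g i) h) 2 volume ^ 2 ≤
      C * ∑' i, eLpNorm (convol h (g i)) 2 volume ^ 2 := by
    rw [← ENNReal.tsum_mul_left]
    refine ENNReal.tsum_le_tsum fun i => ?_
    rw [← mul_pow]
    exact pow_le_pow_left' (eLpNorm_layerU_le hS (hg i) hM hP hMmem hh) 2
  calc eLpNorm (convol h χ) 2 volume ^ 2 + ∑' i, eLpNorm (layerU S P M (g i) h) 2 volume ^ 2
      ≤ eLpNorm (convol h χ) 2 volume ^ 2 + C * ∑' i, eLpNorm (convol h (g i)) 2 volume ^ 2 :=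
        add_le_add_right hU _
    _ ≤ max 1 C * (eLpNorm (convol h χ) 2 volume ^ 2 +
          ∑' i, eLpNorm (convol h (g i)) 2 volume ^ 2) := by
        rw [mul_add]
        gcongr
        · exact le_mul_of_one_le_left' (le_max_left 1 C)
        · exact le_max_right 1 C
    _ ≤ max 1 C * (ENNReal.ofReal B * eLpNorm h 2 volume ^ 2) := by gcongr; exact hframe h hh
    _ ≤ eLpNorm h 2 volume ^ 2 := by
        rw [← mul_assoc]
        exact mul_le_of_le_one_left' (max_one_sq_mul_ofReal_le_one hL hR hadm)

end Layer

theorem ENNReal.tsum_le_of_add_succ_le {a b : ℕ → ℝ≥0∞} (h : ∀ n, b n + a (n + 1) ≤ a n) :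
    ∑' n, b n ≤ a 0 := by
  have hpartial : ∀ N, ∑ n ∈ Finset.range N, b n + a N ≤ a 0 := by
    intro N
    induction N with
    | zero => simp
    | succ N ih =>
      rw [Finset.sum_range_succ, add_assoc]
      exact (add_le_add_right (h N) _).trans ih
  rw [ENNReal.tsum_eq_iSup_nat]
  exact iSup_le fun N => le_self_add.trans (hpartial N)

section Paths

variable {d : ℕ} (Λ : ℕ → Type) (g : (n : ℕ) → Λ n → Ed d → ℂ)
  (M P : ℕ → (Ed d → ℂ) → (Ed d → ℂ)) (S : ℕ → ℝ) (f : Ed d → ℂ)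

@[simp]
theorem pathU_zero (q : (k : Fin 0) → Λ k.1) : pathU Λ g M P S 0 q f = f := rfl

theorem pathU_snoc (n : ℕ) (q : (k : Fin n) → Λ k.1) (lam : Λ n) :
    pathU Λ g M P S (n + 1) (Fin.snoc (α := fun k : Fin (n + 1) => Λ k.1) q lam) f =
      layerU (S n) (P n) (M n) (g n lam) (pathU Λ g M P S n q f) := by
  simp only [pathU, Fin.foldl_succ_last, Fin.snoc_last, Fin.snoc_castSucc]
  rfl

theorem memLp_pathU (hg : ∀ n lam, MemLp (g n lam) 1 volume) (hS : ∀ n, 0 < S n)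
    (hMmem : ∀ n f, MemLp f 2 volume → MemLp (M n f) 2 volume)
    (hPmem : ∀ n f, MemLp f 2 volume → MemLp (P n f) 2 volume) (hf : MemLp f 2 volume) :
    ∀ n q, MemLp (pathU Λ g M P S n q f) 2 volume := by
  intro n
  induction n with
  | zero => exact fun _ => hf
  | succ n ih =>
    intro q
    rw [← Fin.snoc_init_self q, pathU_snoc]
    exact memLp_layerU (hS n) (hPmem n _ (hMmem n _ ((ih _).convol (hg n _))))

def pathEnergy (n : ℕ) : ℝ≥0∞ :=
  ∑' q : (k : Fin n) → Λ k.1, eLpNorm (pathU Λ g M P S n q f) 2 volume ^ 2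

theorem pathEnergy_zero : pathEnergy Λ g M P S f 0 = eLpNorm f 2 volume ^ 2 := by
  simp [pathEnergy]

theorem pathEnergy_succ (n : ℕ) :
    pathEnergy Λ g M P S f (n + 1) = ∑' q : (k : Fin n) → Λ k.1, ∑' lam : Λ n,
      eLpNorm (layerU (S n) (P n) (M n) (g n lam) (pathU Λ g M P S n q f)) 2 volume ^ 2 := by
  rw [pathEnergy, ← (Fin.snocEquiv fun k : Fin (n + 1) => Λ k.1).tsum_eq, ENNReal.tsum_prod',
    ENNReal.tsum_comm]
  exact tsum_congr fun q => tsum_congr fun lam => by rw [← pathU_snoc]; rfl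

end Paths

theorem stmt_6_general {d : ℕ}
    {Λ : ℕ → Type}
    (g : (n : ℕ) → Λ n → Ed d → ℂ) (χ : ℕ → Ed d → ℂ)
    (A B L R S : ℕ → ℝ)
    (M P : ℕ → (Ed d → ℂ) → (Ed d → ℂ))
    (hg1 : ∀ n lam, MemLp (g n lam) 1 volume)
    (hL : ∀ n, 0 ≤ L n) (hR : ∀ n, 0 ≤ R n)
    (hS : ∀ n, 1 ≤ S n)
    (hframe : ∀ (n : ℕ) (f : Ed d → ℂ), MemLp f 2 volume →
      ENNReal.ofReal (A n) * eLpNorm f 2 volume ^ 2 ≤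
          eLpNorm (convol f (χ n)) 2 volume ^ 2 +
            ∑' lam : Λ n, eLpNorm (convol f (g n lam)) 2 volume ^ 2 ∧
        eLpNorm (convol f (χ n)) 2 volume ^ 2 +
            ∑' lam : Λ n, eLpNorm (convol f (g n lam)) 2 volume ^ 2 ≤
          ENNReal.ofReal (B n) * eLpNorm f 2 volume ^ 2)
    (hMmem : ∀ (n : ℕ) (f : Ed d → ℂ), MemLp f 2 volume → MemLp (M n f) 2 volume)
    (hPmem : ∀ (n : ℕ) (f : Ed d → ℂ), MemLp f 2 volume → MemLp (P n f) 2 volume)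
    (hMlip : ∀ (n : ℕ) (f h : Ed d → ℂ), MemLp f 2 volume → MemLp h 2 volume →
      eLpNorm (M n f - M n h) 2 volume ≤ ENNReal.ofReal (L n) * eLpNorm (f - h) 2 volume)
    (hPlip : ∀ (n : ℕ) (f h : Ed d → ℂ), MemLp f 2 volume → MemLp h 2 volume →
      eLpNorm (P n f - P n h) 2 volume ≤ ENNReal.ofReal (R n) * eLpNorm (f - h) 2 volume)
    (hM0 : ∀ n, M n 0 = 0) (hP0 : ∀ n, P n 0 = 0)
    (hadm : ∀ n, max (B n) (B n * L n ^ 2 * R n ^ 2) ≤ 1) :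
    ∀ f : Ed d → ℂ, MemLp f 2 volume →
      (∑' n : ℕ, ∑' (q : (k : Fin n) → Λ k.1),
          eLpNorm (convol (pathU Λ g M P S n q f) (χ n)) 2 volume ^ 2) ≤
        eLpNorm f 2 volume ^ 2 ∧
      (∑' n : ℕ, ∑' (q : (k : Fin n) → Λ k.1),
          eLpNorm (convol (pathU Λ g M P S n q f) (χ n)) 2 volume ^ 2) < ⊤ := by
  intro f hf
  have hS₀ : ∀ n, 0 < S n := fun n => zero_lt_one.trans_le (hS n)
  have hU := memLp_pathU Λ g M P S f hg1 hS₀ hMmem hPmem hf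
  have hstep : ∀ n, (∑' q : (k : Fin n) → Λ k.1,
      eLpNorm (convol (pathU Λ g M P S n q f) (χ n)) 2 volume ^ 2) +
        pathEnergy Λ g M P S f (n + 1) ≤ pathEnergy Λ g M P S f n := by
    intro n
    rw [pathEnergy_succ, pathEnergy, ← ENNReal.tsum_add]
    exact ENNReal.tsum_le_tsum fun q => energy_layerU_le (hg1 n) (hL n) (hR n) (hS₀ n)
      (fun f hf => (hframe n f hf).2) (fun _ => eLpNorm_apply_le_of_lipschitz (hM0 n) (hMlip n))
      (fun _ => eLpNorm_apply_le_of_lipschitz (hP0 n) (hPlip n)) (hMmem n) (hadm n) (hU n q)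
  have hbound := (ENNReal.tsum_le_of_add_succ_le hstep).trans_eq (pathEnergy_zero Λ g M P S f)
  exact ⟨hbound, hbound.trans_lt (ENNReal.pow_lt_top hf.2)⟩

/-- For an admissible module-sequence, the feature extractor is well-defined:
the feature-space norm satisfies |||Φ(f)|||² ≤ ‖f‖₂², and is in particular finite. -/
theorem stmt_6 {d : ℕ}
    {Λ : ℕ → Type} [∀ n, Countable (Λ n)]
    (g : (n : ℕ) → Λ n → Ed d → ℂ) (χ : ℕ → Ed d → ℂ)
    (A B L R S : ℕ → ℝ)
    (M P : ℕ → (Ed d → ℂ) → (Ed d → ℂ))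
    (hg1 : ∀ n lam, MemLp (g n lam) 1 volume) (hg2 : ∀ n lam, MemLp (g n lam) 2 volume)
    (hχ1 : ∀ n, MemLp (χ n) 1 volume) (hχ2 : ∀ n, MemLp (χ n) 2 volume)
    (hA : ∀ n, 0 < A n) (hB : ∀ n, 0 < B n) (hL : ∀ n, 0 ≤ L n) (hR : ∀ n, 0 ≤ R n)
    (hS : ∀ n, 1 ≤ S n)
    (hframe : ∀ (n : ℕ) (f : Ed d → ℂ), MemLp f 2 volume →
      ENNReal.ofReal (A n) * eLpNorm f 2 volume ^ 2 ≤
          eLpNorm (convol f (χ n)) 2 volume ^ 2 +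
            ∑' lam : Λ n, eLpNorm (convol f (g n lam)) 2 volume ^ 2 ∧
        eLpNorm (convol f (χ n)) 2 volume ^ 2 +
            ∑' lam : Λ n, eLpNorm (convol f (g n lam)) 2 volume ^ 2 ≤
          ENNReal.ofReal (B n) * eLpNorm f 2 volume ^ 2)
    (hMmem : ∀ (n : ℕ) (f : Ed d → ℂ), MemLp f 2 volume → MemLp (M n f) 2 volume)
    (hPmem : ∀ (n : ℕ) (f : Ed d → ℂ), MemLp f 2 volume → MemLp (P n f) 2 volume)
    (hMlip : ∀ (n : ℕ) (f h : Ed d → ℂ), MemLp f 2 volume → MemLp h 2 volume →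
      eLpNorm (M n f - M n h) 2 volume ≤ ENNReal.ofReal (L n) * eLpNorm (f - h) 2 volume)
    (hPlip : ∀ (n : ℕ) (f h : Ed d → ℂ), MemLp f 2 volume → MemLp h 2 volume →
      eLpNorm (P n f - P n h) 2 volume ≤ ENNReal.ofReal (R n) * eLpNorm (f - h) 2 volume)
    (hM0 : ∀ n, M n 0 = 0) (hP0 : ∀ n, P n 0 = 0)
    (hadm : ∀ n, max (B n) (B n * L n ^ 2 * R n ^ 2) ≤ 1) :
    ∀ f : Ed d → ℂ, MemLp f 2 volume →
      (∑' n : ℕ, ∑' (q : (k : Fin n) → Λ k.1),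
          eLpNorm (convol (pathU Λ g M P S n q f) (χ n)) 2 volume ^ 2) ≤
        eLpNorm f 2 volume ^ 2 ∧
      (∑' n : ℕ, ∑' (q : (k : Fin n) → Λ k.1),
          eLpNorm (convol (pathU Λ g M P S n q f) (χ n)) 2 volume ^ 2) < ⊤ :=
  stmt_6_general g χ A B L R S M P hg1 hL hR hS hframe hMmem hPmem hMlip hPlip hM0 hP0 hadm
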